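/- arXiv:quant-ph/0608064 — 2 statements merged into one kernel-verified Lean document; each statement's English description precedes it below -/
import Mathlib

section
/- Let n ≥ 1 be a natural number, let S^n be the unit sphere in ℝ^{n+1} with its standard surface measure σ, let 𝒮_{n-1} = 2π^{n/2}/Γ(n/2), and set R_n = (2/n) · 𝒮_{n-1}. Then for any unit vector b ∈ ℝ^{n+1}, the vector-valued integral ∫_{S^n} λ · sgn(⟪b, λ⟫) dσ(λ) equals R_n · b. -/
open MeasureTheory Metric Real
open scoped RealInnerProductSpace

/-- The standard (rotation-invariant) surface measure on the unit sphere
`S^n ⊆ ℝ^{n+1}`, with total mass the surface area `𝒮_n`. -/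
noncomputable def sphereSurfaceMeasure (n : ℕ) :
    Measure (sphere (0 : EuclideanSpace ℝ (Fin (n + 1))) 1) :=
  (volume : Measure (EuclideanSpace ℝ (Fin (n + 1)))).toSphere

/-- The surface area of the unit sphere in `ℝ^m`: `𝒮_{m-1} = 2 π^{m/2} / Γ(m/2)`. -/
noncomputable def sphereArea (m : ℕ) : ℝ :=
  2 * Real.pi ^ ((m : ℝ) / 2) / Real.Gamma ((m : ℝ) / 2)

/-- `sgn x = 1` if `x ≥ 0` and `sgn x = -1` if `x < 0`. -/
noncomputable def sgn (x : ℝ) : ℝ := if 0 ≤ x then 1 else -1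

/-!
Polar coordinates turn a sphere integral of a `1`-homogeneous `f` into a Gaussian integral:
`∫ e^{-‖x‖²} f x dx = (∫₀^∞ r^{n+1} e^{-r²} dr) • ∫_{Sⁿ} f dσ`. For `f x = sgn ⟪b, x⟫ • x` the
Gaussian integral is invariant under the reflection fixing `b` and negating `b^⊥`, so the sphere
integral is `c • b` with `c = ∫_{Sⁿ} |⟪b, λ⟫| dσ`. The same polar formula computes `c`: splitting
space orthogonally as `ℝ b ⊕ b^⊥`, the Gaussian integral of `|⟪b, x⟫|` factorizes into
`∫ |t| e^{-t²} dt · π^{n/2} = π^{n/2}`, while the radial factor is `Γ(n/2 + 1) / 2`.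
-/

open Set

lemma measurable_sgn : Measurable sgn :=
  Measurable.ite measurableSet_Ici measurable_const measurable_const

lemma abs_sgn (t : ℝ) : |sgn t| = 1 := by
  unfold sgn; split <;> simp

lemma sgn_mul_self (t : ℝ) : sgn t * t = |t| := by
  unfold sgn; split_ifs with h
  · rw [one_mul, abs_of_nonneg h]
  · rw [abs_of_neg (not_le.1 h), neg_one_mul]

lemma sgn_mul_of_pos {c : ℝ} (hc : 0 < c) (t : ℝ) : sgn (c * t) = sgn t := by
  simp only [sgn, mul_nonneg_iff_of_pos_left hc]

lemma integral_Ioi_pow_mul_exp_neg_sq (k : ℕ) :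
    ∫ r in Ioi (0 : ℝ), r ^ k * exp (-r ^ 2) = Gamma ((k + 1) / 2) / 2 := by
  have h := integral_rpow_mul_exp_neg_mul_rpow (p := 2) (q := k) two_pos
    (by linarith [k.cast_nonneg (α := ℝ)]) one_pos
  simp only [one_rpow, one_mul, neg_mul, rpow_natCast, rpow_two] at h
  rw [h]; ring

lemma integral_abs_mul_exp_neg_sq : ∫ t : ℝ, |t| * exp (-t ^ 2) = 1 := by
  have h := integral_comp_abs (f := fun t ↦ t * exp (-t ^ 2))
  simp only [sq_abs] at h
  have h1 := integral_Ioi_pow_mul_exp_neg_sq 1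
  simp only [pow_one] at h1
  rw [h, h1]
  norm_num

section Polar

variable {E F : Type*} [NormedAddCommGroup E] [NormedSpace ℝ E] [FiniteDimensional ℝ E]
  [MeasurableSpace E] [BorelSpace E] [NormedAddCommGroup F] [NormedSpace ℝ F]

lemma integral_volumeIoiPow (n : ℕ) (f : ℝ → F) :
    ∫ r, f r ∂Measure.volumeIoiPow n = ∫ r in Ioi (0 : ℝ), r ^ n • f r := by
  simp only [Measure.volumeIoiPow, ENNReal.ofReal]
  rw [integral_withDensity_eq_integral_smul (measurable_subtype_coe.pow_const _).real_toNNReal,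
    integral_subtype_comap measurableSet_Ioi fun a ↦ Real.toNNReal (a ^ n) • f a]
  refine setIntegral_congr_fun measurableSet_Ioi fun x hx ↦ ?_
  rw [NNReal.smul_def, Real.coe_toNNReal _ (pow_nonneg hx.out.le _)]

lemma integral_norm_smul_eq_smul_integral_toSphere [Nontrivial E] (μ : Measure E)
    [μ.IsAddHaarMeasure] (g : ℝ → ℝ) {f : E → F}
    (hf : ∀ r : ℝ, 0 < r → ∀ x, f (r • x) = r • f x) :
    ∫ x, g ‖x‖ • f x ∂μ =
      (∫ r in Ioi (0 : ℝ), r ^ Module.finrank ℝ E * g r) • ∫ l, f l ∂μ.toSphere := by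
  calc ∫ x, g ‖x‖ • f x ∂μ = ∫ x : ({0}ᶜ : Set E), g ‖x.1‖ • f x.1 ∂μ.comap (↑) := by
        rw [integral_subtype_comap (measurableSet_singleton _).compl fun x ↦ g ‖x‖ • f x,
          restrict_compl_singleton]
    _ = ∫ p : sphere (0 : E) 1 × Ioi (0 : ℝ), (p.2.1 * g p.2.1) • f p.1
          ∂μ.toSphere.prod (.volumeIoiPow (Module.finrank ℝ E - 1)) := by
        rw [← μ.measurePreserving_homeomorphUnitSphereProd.integral_comp
          (Homeomorph.measurableEmbedding _)]
        refine integral_congr_ae (.of_forall fun x ↦ ?_)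
        have hx : 0 < ‖x.1‖ := norm_pos_iff.2 x.2
        simp only [homeomorphUnitSphereProd_apply_fst_coe, homeomorphUnitSphereProd_apply_snd_coe]
        rw [mul_smul, smul_comm ‖x.1‖, ← hf _ hx, smul_inv_smul₀ hx.ne']
    _ = (∫ r in Ioi (0 : ℝ), r ^ Module.finrank ℝ E * g r) • ∫ l, f l ∂μ.toSphere := by
        rw [← integral_prod_swap]
        simp only [Prod.fst_swap, Prod.snd_swap]
        rw [integral_prod_smul (𝕜 := ℝ) (fun r : Ioi (0 : ℝ) ↦ r.1 * g r.1)
          (fun l : sphere (0 : E) 1 ↦ f l), integral_volumeIoiPow _ fun r ↦ r * g r]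
        congr 1
        refine setIntegral_congr_fun measurableSet_Ioi fun r _ ↦ ?_
        rw [smul_eq_mul, ← mul_assoc, ← pow_succ, Nat.sub_add_cancel Module.finrank_pos]

end Polar

section InnerProductSpace

variable {E : Type*} [NormedAddCommGroup E] [InnerProductSpace ℝ E] [FiniteDimensional ℝ E]
  [MeasurableSpace E] [BorelSpace E]

lemma integral_comp_inner_mul_exp_neg_norm_sq {b : E} (hb : ‖b‖ = 1) (h : ℝ → ℝ) :
    ∫ x, h ⟪b, x⟫ * exp (-‖x‖ ^ 2) =
      (∫ t, h t * exp (-t ^ 2)) * π ^ (((Module.finrank ℝ E : ℝ) - 1) / 2) := by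
  set K := ℝ ∙ b
  let e : E ≃ᵐ K × Kᗮ := K.orthogonalDecomposition.toHomeomorph.toMeasurableEquiv.trans
    (MeasurableEquiv.toLp 2 (K × Kᗮ)).symm
  have he : MeasurePreserving e := K.orthogonalDecomposition.measurePreserving.trans
    (WithLp.volume_preserving_symm_measurableEquiv_toLp_prod K Kᗮ)
  have hsplit : ∀ p : K × Kᗮ, h ⟪b, e.symm p⟫ * exp (-‖e.symm p‖ ^ 2) =
      (h ⟪b, p.1⟫ * exp (-‖(p.1 : E)‖ ^ 2)) * exp (-‖(p.2 : E)‖ ^ 2) := by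
    rintro ⟨k, y⟩
    have hky : ⟪(k : E), y⟫ = 0 := K.inner_right_of_mem_orthogonal k.2 y.2
    have hby : ⟪b, (y : E)⟫ = 0 := Submodule.mem_orthogonal_singleton_iff_inner_right.1 y.2
    have he_symm : e.symm (k, y) = k + y := rfl
    rw [he_symm, inner_add_right, hby, add_zero, norm_add_sq_real, hky, mul_assoc, ← exp_add]
    ring_nf
  have hline : ∫ k : K, h ⟪b, k⟫ * exp (-‖(k : E)‖ ^ 2) = ∫ t, h t * exp (-t ^ 2) := by
    rw [← (LinearIsometryEquiv.toSpanUnitSingleton b hb).measurePreserving.integral_comp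
      (LinearIsometryEquiv.toSpanUnitSingleton b hb).toHomeomorph.measurableEmbedding]
    simp [real_inner_smul_right, hb, norm_smul]
  have hperp : ∫ y : Kᗮ, exp (-‖(y : E)‖ ^ 2) = π ^ (((Module.finrank ℝ E : ℝ) - 1) / 2) := by
    have hdim := K.finrank_add_finrank_orthogonal
    rw [finrank_span_singleton (norm_ne_zero_iff.1 (hb ▸ one_ne_zero))] at hdim
    simpa [← hdim] using GaussianFourier.integral_rexp_neg_mul_sq_norm (V := Kᗮ) one_pos
  rw [← (he.symm e).integral_comp', funext hsplit, Measure.volume_eq_prod,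
    integral_prod_mul (fun k : K ↦ h ⟪b, k⟫ * exp (-‖(k : E)‖ ^ 2))
      (fun y : Kᗮ ↦ exp (-‖(y : E)‖ ^ 2)), hline, hperp]

lemma integral_smul_smul_mem_span_singleton (b : E) (g h : ℝ → ℝ) :
    ∫ x, g ‖x‖ • h ⟪b, x⟫ • x ∈ ℝ ∙ b := by
  set R := (ℝ ∙ b).reflection
  have hRb : R b = b :=
    Submodule.reflection_mem_subspace_eq_self (Submodule.mem_span_singleton_self b)
  have hR : ∀ x, ⟪b, R x⟫ = ⟪b, x⟫ := fun x ↦ by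
    conv_lhs => rw [← hRb]
    exact R.inner_map_map b x
  rw [← Submodule.reflection_eq_self_iff]
  calc R (∫ x, g ‖x‖ • h ⟪b, x⟫ • x) = ∫ x, R (g ‖x‖ • h ⟪b, x⟫ • x) :=
        (R.toLinearIsometry.integral_comp_comm _).symm
    _ = ∫ x, g ‖R x‖ • h ⟪b, R x⟫ • R x := by
        simp only [map_smul, LinearIsometryEquiv.norm_map, hR]
    _ = ∫ x, g ‖x‖ • h ⟪b, x⟫ • x :=
        R.measurePreserving.integral_comp R.toHomeomorph.measurableEmbedding
          fun x ↦ g ‖x‖ • h ⟪b, x⟫ • x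

lemma integral_toSphere_smul_mem_span_singleton [Nontrivial E] (b : E) {h : ℝ → ℝ}
    (hh : ∀ r : ℝ, 0 < r → ∀ t, h (r * t) = h t) :
    ∫ l, h ⟪b, l⟫ • (l : E) ∂(volume : Measure E).toSphere ∈ ℝ ∙ b := by
  have hK : 0 < ∫ r in Ioi (0 : ℝ), r ^ Module.finrank ℝ E * exp (-r ^ 2) := by
    rw [integral_Ioi_pow_mul_exp_neg_sq]
    exact half_pos (Gamma_pos_of_pos (by positivity))
  rw [← Submodule.smul_mem_iff _ hK.ne', ← integral_norm_smul_eq_smul_integral_toSphere volume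
    (fun r ↦ exp (-r ^ 2)) (f := fun x ↦ h ⟪b, x⟫ • x)
    fun r hr x ↦ by rw [inner_smul_right, hh r hr, smul_comm]]
  exact integral_smul_smul_mem_span_singleton b (fun r ↦ exp (-r ^ 2)) h

lemma integral_toSphere_sgn_inner_smul [Nontrivial E] {b : E} (hb : ‖b‖ = 1) :
    ∫ l, sgn ⟪b, l⟫ • (l : E) ∂(volume : Measure E).toSphere =
      (∫ l, |⟪b, (l : E)⟫| ∂(volume : Measure E).toSphere) • b := by
  obtain ⟨c, hc⟩ := Submodule.mem_span_singleton.1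
    (integral_toSphere_smul_mem_span_singleton b fun r hr t ↦ sgn_mul_of_pos hr t)
  have hint : Integrable (fun l : sphere (0 : E) 1 ↦ sgn ⟪b, l⟫ • (l : E))
      (volume : Measure E).toSphere := by
    refine .of_bound (Measurable.aestronglyMeasurable ?_) 1 (.of_forall fun l ↦ ?_)
    · exact (measurable_sgn.comp (by fun_prop)).smul (by fun_prop)
    · rw [norm_smul, Real.norm_eq_abs, abs_sgn, one_mul, norm_eq_of_mem_sphere]
  have hc' : c = ∫ l, |⟪b, (l : E)⟫| ∂(volume : Measure E).toSphere := by
    calc c = ⟪b, c • b⟫ := by rw [real_inner_smul_right, real_inner_self_eq_norm_sq, hb]; ring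
      _ = ∫ l, ⟪b, sgn ⟪b, l⟫ • (l : E)⟫ ∂(volume : Measure E).toSphere := by
        rw [hc, integral_inner hint]
      _ = _ := by simp only [real_inner_smul_right, sgn_mul_self]
  rw [← hc, hc']

lemma integral_toSphere_abs_inner {n : ℕ} (hE : Module.finrank ℝ E = n + 1) {b : E}
    (hb : ‖b‖ = 1) :
    ∫ l, |⟪b, (l : E)⟫| ∂(volume : Measure E).toSphere =
      2 * π ^ ((n : ℝ) / 2) / Gamma (n / 2 + 1) := by
  have : Nontrivial E := Module.nontrivial_of_finrank_eq_succ hE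
  have hpolar := integral_norm_smul_eq_smul_integral_toSphere (volume : Measure E)
    (fun r ↦ exp (-r ^ 2)) (f := fun x ↦ |⟪b, x⟫|)
    fun r hr x ↦ by rw [inner_smul_right, abs_mul, abs_of_pos hr, smul_eq_mul]
  simp only [smul_eq_mul, mul_comm (exp _)] at hpolar
  rw [integral_comp_inner_mul_exp_neg_norm_sq hb, integral_abs_mul_exp_neg_sq,
    integral_Ioi_pow_mul_exp_neg_sq, hE, Nat.cast_succ, add_sub_cancel_right, one_mul,
    show ((n : ℝ) + 1 + 1) / 2 = n / 2 + 1 by ring] at hpolar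
  rw [eq_div_iff (Gamma_pos_of_pos (by positivity)).ne', hpolar]
  ring

end InnerProductSpace

theorem integral_sgn_inner_smul_sphere (n : ℕ) (hn : 1 ≤ n)
    (b : EuclideanSpace ℝ (Fin (n + 1))) (hb : ‖b‖ = 1) :
    ∫ l : sphere (0 : EuclideanSpace ℝ (Fin (n + 1))) 1,
        sgn ⟪b, (l : EuclideanSpace ℝ (Fin (n + 1)))⟫ •
          (l : EuclideanSpace ℝ (Fin (n + 1))) ∂(sphereSurfaceMeasure n) =
      ((2 / n) * sphereArea n) • b := by
  rw [sphereSurfaceMeasure, integral_toSphere_sgn_inner_smul hb,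
    integral_toSphere_abs_inner finrank_euclideanSpace_fin hb]
  have hn' : (n : ℝ) / 2 ≠ 0 := by positivity
  rw [sphereArea, Gamma_add_one hn']
  field_simp
end

section
/- For every natural number n ≥ 1, the quantity p = (2/(n√π)) · Γ((n+1)/2)/Γ(n/2) satisfies √(1/(2πn)) ≤ p ≤ √(2/(πn)). (This is the two-sided bound on the acceptance probability of one round of the rejection-sampling protocol on the sphere S^n.) -/
/-!
Log-convexity of `Γ` at the midpoint `x + 1/2` of `x, x + 1`, and at the midpoint `x + 1` of
`x + 1/2, x + 3/2`, together with `Γ (y + 1) = y Γ y`, gives the Gautschi-type bounds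
`x² / (x + 1/2) ≤ (Γ (x + 1/2) / Γ x)² ≤ x`. At `x = n/2` they squeeze `p²` between
`2 / (π (n + 1))` and `2 / (π n)`, and both of these lie within the claimed range.
-/

namespace Real

theorem Gamma_midpoint_sq_le_mul {s t : ℝ} (hs : 0 < s) (ht : 0 < t) :
    Gamma ((s + t) / 2) ^ 2 ≤ Gamma s * Gamma t := by
  have h := Gamma_mul_add_mul_le_rpow_Gamma_mul_rpow_Gamma hs ht one_half_pos one_half_pos
    (add_halves 1)
  rw [← sqrt_eq_rpow, ← sqrt_eq_rpow, ← sqrt_mul (Gamma_pos_of_pos hs).le,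
    show 1 / 2 * s + 1 / 2 * t = (s + t) / 2 by ring] at h
  calc Gamma ((s + t) / 2) ^ 2 ≤ √(Gamma s * Gamma t) ^ 2 :=
        pow_le_pow_left₀ (Gamma_pos_of_pos (by positivity)).le h 2
    _ = Gamma s * Gamma t :=
        sq_sqrt (mul_pos (Gamma_pos_of_pos hs) (Gamma_pos_of_pos ht)).le

theorem Gamma_add_half_div_Gamma_sq_le {x : ℝ} (hx : 0 < x) :
    (Gamma (x + 1 / 2) / Gamma x) ^ 2 ≤ x := by
  have h := Gamma_midpoint_sq_le_mul hx (by linarith : 0 < x + 1)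
  rw [Gamma_add_one hx.ne', show (x + (x + 1)) / 2 = x + 1 / 2 by ring] at h
  rw [div_pow, div_le_iff₀ (pow_pos (Gamma_pos_of_pos hx) 2)]
  linarith

theorem sq_div_le_Gamma_add_half_div_Gamma_sq {x : ℝ} (hx : 0 < x) :
    x ^ 2 / (x + 1 / 2) ≤ (Gamma (x + 1 / 2) / Gamma x) ^ 2 := by
  have h := Gamma_midpoint_sq_le_mul (by linarith : 0 < x + 1 / 2) (by linarith : 0 < x + 3 / 2)
  rw [show (x + 1 / 2 + (x + 3 / 2)) / 2 = x + 1 by ring, Gamma_add_one hx.ne',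
    show x + 3 / 2 = x + 1 / 2 + 1 by ring, Gamma_add_one (by positivity)] at h
  rw [div_pow, div_le_div_iff₀ (by positivity) (pow_pos (Gamma_pos_of_pos hx) 2)]
  linarith

end Real

open Real

theorem acceptance_probability_bounds (n : ℕ) (hn : 1 ≤ n) :
    Real.sqrt (1 / (2 * Real.pi * n)) ≤
        2 / (n * Real.sqrt Real.pi) *
          (Real.Gamma ((n + 1 : ℝ) / 2) / Real.Gamma ((n : ℝ) / 2)) ∧
      2 / (n * Real.sqrt Real.pi) *
          (Real.Gamma ((n + 1 : ℝ) / 2) / Real.Gamma ((n : ℝ) / 2)) ≤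
        Real.sqrt (2 / (Real.pi * n)) := by
  have hn : (1 : ℝ) ≤ n := by exact_mod_cast hn
  have hx : (0 : ℝ) < n / 2 := by linarith
  rw [show ((n + 1 : ℝ)) / 2 = n / 2 + 1 / 2 by ring]
  set r := Gamma (n / 2 + 1 / 2) / Gamma (n / 2)
  have hp : 0 ≤ 2 / (n * √π) * r := by positivity
  have hp_sq : (2 / (n * √π) * r) ^ 2 = 4 / (n ^ 2 * π) * r ^ 2 := by
    rw [mul_pow, div_pow, mul_pow, sq_sqrt pi_pos.le]
    norm_num
  rw [← sqrt_sq hp, hp_sq]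
  constructor
  · apply sqrt_le_sqrt
    calc 1 / (2 * π * n) ≤ 4 / (n ^ 2 * π) * ((n / 2) ^ 2 / (n / 2 + 1 / 2)) := by
          field_simp
          nlinarith [pi_pos]
      _ ≤ 4 / (n ^ 2 * π) * r ^ 2 := by
          gcongr
          exact sq_div_le_Gamma_add_half_div_Gamma_sq hx
  · apply sqrt_le_sqrt
    calc 4 / (n ^ 2 * π) * r ^ 2 ≤ 4 / (n ^ 2 * π) * (n / 2) := by
          gcongr
          exact Gamma_add_half_div_Gamma_sq_le hx
      _ = 2 / (π * n) := by
          field_simp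
          ring
end
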